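/- Let F : ℂ × ℂ → ℂ be holomorphic on all of ℂ² and suppose F(z, conj z) = 0 for every z ∈ ℂ. Then F is identically zero on ℂ². -/

import Mathlib

/-!
The complex-linear change of variables `(u, v) ↦ (u + i v, u - i v)` maps `ℝ²` onto the set
`{(z, conj z)}`, so `G(u, v) = F(u + i v, u - i v)` is an entire function vanishing on `ℝ²`.
Applying the one-variable identity theorem first in `u` (for fixed real `v`), then in `v`,
gives `G = 0`, and the change of variables is invertible.
-/

open Complex ComplexConjugate Filter Topology

theorem Complex.tendsto_ofReal_nhdsNE (x : ℝ) :
    Tendsto ((↑) : ℝ → ℂ) (𝓝[≠] x) (𝓝[≠] (x : ℂ)) :=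
  continuous_ofReal.continuousWithinAt.tendsto_nhdsWithin fun _ _ ↦ by simp_all

section

variable {E : Type*} [NormedAddCommGroup E] [NormedSpace ℂ E] [CompleteSpace E]

theorem Differentiable.eq_zero_of_forall_ofReal {f : ℂ → E} (hf : Differentiable ℂ f)
    (h : ∀ x : ℝ, f x = 0) : f = 0 := by
  have hzeros : ∃ᶠ z in 𝓝[≠] (0 : ℂ), f z = 0 := by
    simpa using (tendsto_ofReal_nhdsNE 0).frequently (Frequently.of_forall h)
  have hf_an : AnalyticOnNhd ℂ f Set.univ := analyticOnNhd_univ_iff_differentiable.2 hf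
  funext z
  exact hf_an.eqOn_zero_of_preconnected_of_frequently_eq_zero isPreconnected_univ
    (Set.mem_univ 0) hzeros (Set.mem_univ z)

theorem Differentiable.eq_zero_of_forall_ofReal_prod {F : ℂ × ℂ → E}
    (hF : Differentiable ℂ F) (h : ∀ x y : ℝ, F (x, y) = 0) : F = 0 := by
  have hfst (u : ℂ) (y : ℝ) : F (u, y) = 0 :=
    congrFun ((hF.comp (differentiable_id.prodMk (differentiable_const _))).eq_zero_of_forall_ofReal
      fun x ↦ h x y) u
  funext ⟨u, v⟩
  exact congrFun
    ((hF.comp ((differentiable_const _).prodMk differentiable_id)).eq_zero_of_forall_ofReal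
      (hfst u)) v

end

/-- an entire function on `ℂ²` vanishing on the maximally totally real set
`{(z, conj z) : z ∈ ℂ}` vanishes identically. -/
theorem stmt5 (F : ℂ × ℂ → ℂ) (hF : Differentiable ℂ F)
    (hvan : ∀ z : ℂ, F (z, conj z) = 0) :
    ∀ w : ℂ × ℂ, F w = 0 := by
  set G : ℂ × ℂ → ℂ := fun p ↦ F (p.1 + I * p.2, p.1 - I * p.2)
  have hG : Differentiable ℂ G := hF.comp (by fun_prop)
  have hG_real (x y : ℝ) : G (x, y) = 0 := by
    have hconj : conj (x + I * y : ℂ) = x - I * y := by simp [sub_eq_add_neg]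
    simpa [G, hconj] using hvan (x + I * y)
  rintro ⟨a, b⟩
  have hinv : ((a + b) / 2 + I * ((a - b) / (2 * I)),
      (a + b) / 2 - I * ((a - b) / (2 * I))) = (a, b) := by
    ext <;> field_simp <;> ring
  simpa [G, hinv] using
    congrFun (hG.eq_zero_of_forall_ofReal_prod hG_real) ((a + b) / 2, (a - b) / (2 * I))
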